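/- Let x ∈ {3, −3} and A = (0 −1; 1 x) ∈ GL₂ℤ. Then the action of the subgroup H_A of GL₂ℤ generated by A and −Id on the set S_A = {v ∈ ℤ² : ℤv + ℤ(Av) = ℤ²} has exactly two orbits. For x = 3, the two orbits are the H_A-orbits of (1,0) and of (−1,1), and these orbits are disjoint. -/

import Mathlib

/-!
A vector `v = (a, b)` lies in `S_A` iff `Q(v) = det (v, A v) = a² + x a b + b²` is a unit, and
`Q` is invariant under `H_A`; so vectors with `Q = 1` and with `Q = -1` lie in different orbits.
Conversely, for `x = ±3` and `|a b| > 1` one of `A v`, `A⁻¹ v` has strictly smaller `a² + b²`: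
the two changes have product `9 a b (2 x Q(v) - 5 a b) < 0`. Descending, every `v ∈ S_A` reaches
a vector with `|a b| ≤ 1`; these are `±e₁, ±A e₁` when `Q = 1`, and a single pair `±r` when
`Q = -1`.
-/

open Matrix

abbrev GL2Z := GL (Fin 2) ℤ

/-- `S_A = {v ∈ ℤ² : ℤv + ℤ(Av) = ℤ²}`. -/
def SA (A : GL2Z) : Set (Fin 2 → ℤ) :=
  {v | Submodule.span ℤ {v, (A : Matrix (Fin 2) (Fin 2) ℤ).mulVec v} = ⊤}

/-- `H_A = ⟨A, -Id⟩ ≤ GL₂ℤ`. -/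
def HA (A : GL2Z) : Subgroup GL2Z := Subgroup.closure {A, -1}

/-- `v` and `w` lie in the same `H_A`-orbit. -/
def SameOrbit (A : GL2Z) (v w : Fin 2 → ℤ) : Prop :=
  ∃ B ∈ HA A, (B : Matrix (Fin 2) (Fin 2) ℤ).mulVec v = w

theorem span_pair_eq_top_iff {R : Type*} [CommRing R] (v w : Fin 2 → R) :
    Submodule.span R {v, w} = ⊤ ↔ IsUnit (v 0 * w 1 - v 1 * w 0) := by
  have hspan : Submodule.span R {v, w} = LinearMap.range (Matrix.of ![v, w])ᵀ.mulVecLin := by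
    rw [Matrix.range_mulVecLin, Matrix.col, Matrix.transpose_transpose]
    exact congrArg _ (Matrix.range_cons_cons_empty v w _).symm
  rw [hspan, LinearMap.range_eq_top, Matrix.coe_mulVecLin, Matrix.mulVec_surjective_iff_isUnit,
    Matrix.isUnit_iff_isUnit_det, Matrix.det_transpose, Matrix.det_fin_two]
  rfl

def quadForm (x : ℤ) (v : Fin 2 → ℤ) : ℤ := v 0 ^ 2 + x * v 0 * v 1 + v 1 ^ 2

namespace SameOrbit

variable {A : GL2Z} {u v w : Fin 2 → ℤ}

theorem refl (A : GL2Z) (v : Fin 2 → ℤ) : SameOrbit A v v :=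
  ⟨1, one_mem _, by simp⟩

theorem symm (h : SameOrbit A v w) : SameOrbit A w v := by
  obtain ⟨B, hB, rfl⟩ := h
  exact ⟨B⁻¹, inv_mem hB, by rw [mulVec_mulVec, Units.inv_mul, one_mulVec]⟩

theorem trans (huv : SameOrbit A u v) (hvw : SameOrbit A v w) : SameOrbit A u w := by
  obtain ⟨B, hB, rfl⟩ := huv
  obtain ⟨C, hC, rfl⟩ := hvw
  exact ⟨C * B, mul_mem hC hB, by rw [Units.val_mul, mulVec_mulVec]⟩

theorem mulVec_self (A : GL2Z) (v : Fin 2 → ℤ) :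
    SameOrbit A v ((A : Matrix (Fin 2) (Fin 2) ℤ) *ᵥ v) :=
  ⟨A, Subgroup.subset_closure (Set.mem_insert _ _), rfl⟩

theorem neg (A : GL2Z) (v : Fin 2 → ℤ) : SameOrbit A v (-v) :=
  ⟨-1, Subgroup.subset_closure (Set.mem_insert_of_mem _ rfl), by
    rw [Units.val_neg, Units.val_one, neg_mulVec, one_mulVec]⟩

theorem of_eq_smul {s : ℤ} (hs : s * s = 1) (h : w = s • v) : SameOrbit A v w := by
  rcases Int.eq_one_or_neg_one_of_mul_eq_one hs with rfl | rfl
  · simpa [h] using refl A v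
  · simpa [h] using neg A v

end SameOrbit

section

variable {x : ℤ} {A : GL2Z} {u v w : Fin 2 → ℤ}

theorem mulVec_eq_of_coe_eq (hA : (A : Matrix (Fin 2) (Fin 2) ℤ) = !![0, -1; 1, x])
    (v : Fin 2 → ℤ) :
    (A : Matrix (Fin 2) (Fin 2) ℤ) *ᵥ v = ![-v 1, v 0 + x * v 1] := by
  rw [hA]
  ext i
  fin_cases i <;> simp [mulVec, dotProduct, Fin.sum_univ_two]

theorem mem_SA_iff (hA : (A : Matrix (Fin 2) (Fin 2) ℤ) = !![0, -1; 1, x]) :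
    v ∈ SA A ↔ IsUnit (quadForm x v) := by
  have hdet : v 0 * ![-v 1, v 0 + x * v 1] 1 - v 1 * ![-v 1, v 0 + x * v 1] 0 = quadForm x v := by
    simp only [quadForm, cons_val_zero, cons_val_one]
    ring
  rw [SA, Set.mem_ofPred_eq, span_pair_eq_top_iff, mulVec_eq_of_coe_eq hA, hdet]

theorem quadForm_mulVec_of_mem_HA (hA : (A : Matrix (Fin 2) (Fin 2) ℤ) = !![0, -1; 1, x])
    {B : GL2Z} (hB : B ∈ HA A) :
    ∀ v, quadForm x ((B : Matrix (Fin 2) (Fin 2) ℤ) *ᵥ v) = quadForm x v := by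
  induction hB using Subgroup.closure_induction with
  | mem B hB =>
    rcases hB with rfl | rfl <;> intro v
    · simp only [mulVec_eq_of_coe_eq hA, quadForm, cons_val_zero, cons_val_one]
      ring
    · simp [quadForm]
  | one => simp
  | mul B C _ _ hB hC => intro v; rw [Units.val_mul, ← mulVec_mulVec, hB, hC]
  | inv B _ hB => intro v; rw [← hB (↑B⁻¹ *ᵥ v), mulVec_mulVec, Units.mul_inv, one_mulVec]

theorem SameOrbit.quadForm_eq (hA : (A : Matrix (Fin 2) (Fin 2) ℤ) = !![0, -1; 1, x])
    (h : SameOrbit A v w) : quadForm x v = quadForm x w := by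
  obtain ⟨B, hB, rfl⟩ := h
  exact (quadForm_mulVec_of_mem_HA hA hB v).symm

theorem sameOrbit_of_mul_eq_zero (hA : (A : Matrix (Fin 2) (Fin 2) ℤ) = !![0, -1; 1, x])
    (h0 : u 0 * u 1 = 0) (h1 : u 0 ^ 2 + u 1 ^ 2 = 1) : SameOrbit A ![1, 0] u := by
  rcases mul_eq_zero.mp h0 with hu | hu
  · have he1 : (A : Matrix (Fin 2) (Fin 2) ℤ) *ᵥ ![1, 0] = ![0, 1] := by
      rw [mulVec_eq_of_coe_eq hA]; simp
    refine (SameOrbit.mulVec_self A _).trans (he1 ▸ SameOrbit.of_eq_smul (s := u 1) ?_ ?_)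
    · rw [hu] at h1; linear_combination h1
    · ext i; fin_cases i <;> simp [hu]
  · refine SameOrbit.of_eq_smul (s := u 0) ?_ ?_
    · rw [hu] at h1; linear_combination h1
    · ext i; fin_cases i <;> simp [hu]

theorem sameOrbit_of_sq_eq_one (hv0 : v 0 ^ 2 = 1) (hw0 : w 0 ^ 2 = 1)
    (h : v 0 * v 1 = w 0 * w 1) : SameOrbit A v w := by
  refine SameOrbit.of_eq_smul (s := v 0 * w 0) (by linear_combination w 0 ^ 2 * hv0 + hw0) ?_
  ext i; fin_cases i <;> simp
  · linear_combination (-w 0) * hv0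
  · linear_combination (-w 1) * hw0 - w 0 * h

theorem exists_shorter_neighbour (hx : x = 3 ∨ x = -3)
    (hv : IsUnit (quadForm x v)) (hbig : 1 < |v 0 * v 1|) :
    v 1 ^ 2 + (v 0 + x * v 1) ^ 2 < v 0 ^ 2 + v 1 ^ 2 ∨
      (x * v 0 + v 1) ^ 2 + v 0 ^ 2 < v 0 ^ 2 + v 1 ^ 2 := by
  by_contra! h
  have hprod : (x * v 1 * (2 * v 0 + x * v 1)) * (x * v 0 * (x * v 0 + 2 * v 1)) =
      9 * (v 0 * v 1) * (2 * x * quadForm x v - 5 * (v 0 * v 1)) := by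
    rcases hx with rfl | rfl <;> (unfold quadForm; ring)
  have hnonneg : 0 ≤ (x * v 1 * (2 * v 0 + x * v 1)) * (x * v 0 * (x * v 0 + 2 * v 1)) :=
    mul_nonneg (by nlinarith [h.1]) (by nlinarith [h.2])
  rcases Int.isUnit_iff.mp hv with hQ | hQ <;> rw [hQ] at hprod <;>
    rcases lt_abs.mp hbig with hab | hab <;> rcases hx with rfl | rfl <;> nlinarith

theorem exists_abs_mul_le_one_sameOrbit (hx : x = 3 ∨ x = -3)
    (hA : (A : Matrix (Fin 2) (Fin 2) ℤ) = !![0, -1; 1, x])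
    (hv : IsUnit (quadForm x v)) : ∃ w, |w 0 * w 1| ≤ 1 ∧ SameOrbit A w v := by
  induction hn : (v 0 ^ 2 + v 1 ^ 2).toNat using Nat.strong_induction_on generalizing v with
  | _ n ih =>
  by_cases hsmall : |v 0 * v 1| ≤ 1
  · exact ⟨v, hsmall, .refl A v⟩
  have descend : ∀ w, SameOrbit A w v → w 0 ^ 2 + w 1 ^ 2 < v 0 ^ 2 + v 1 ^ 2 →
      ∃ u, |u 0 * u 1| ≤ 1 ∧ SameOrbit A u v := by
    intro w hwv hlt
    have hn' : (w 0 ^ 2 + w 1 ^ 2).toNat < n := by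
      have := sq_nonneg (w 0); have := sq_nonneg (w 1); omega
    obtain ⟨u, hu, huw⟩ := ih _ hn' (v := w) (by rwa [hwv.quadForm_eq hA]) rfl
    exact ⟨u, hu, huw.trans hwv⟩
  rcases exists_shorter_neighbour hx hv (not_le.mp hsmall) with hlt | hlt
  · refine descend _ (SameOrbit.mulVec_self A v).symm ?_
    simpa [mulVec_eq_of_coe_eq hA] using hlt
  · refine descend ![x * v 0 + v 1, -v 0] ?_ (by simpa using hlt)
    convert SameOrbit.mulVec_self A ![x * v 0 + v 1, -v 0]
    rw [mulVec_eq_of_coe_eq hA]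
    ext i
    fin_cases i <;> simp

theorem quadForm_cases_of_abs_mul_le_one (hx : x = 3 ∨ x = -3) (hv : |v 0 * v 1| ≤ 1)
    (hQ : IsUnit (quadForm x v)) :
    (quadForm x v = 1 ∧ v 0 * v 1 = 0 ∧ v 0 ^ 2 + v 1 ^ 2 = 1) ∨
      (quadForm x v = -1 ∧ v 0 ^ 2 = 1 ∧ v 1 ^ 2 = 1) := by
  unfold quadForm at *
  generalize v 0 = a at *
  generalize v 1 = b at *
  rw [Int.isUnit_iff] at hQ
  rw [abs_le] at hv
  have hsum : a ^ 2 + b ^ 2 ≤ 4 := by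
    rcases hx with rfl | rfl <;> rcases hQ with h | h <;> nlinarith
  obtain ⟨ha0, ha1⟩ : -2 ≤ a ∧ a ≤ 2 := by constructor <;> nlinarith
  obtain ⟨hb0, hb1⟩ : -2 ≤ b ∧ b ≤ 2 := by constructor <;> nlinarith
  rcases hx with rfl | rfl <;> interval_cases a <;> interval_cases b <;> omega

theorem sameOrbit_of_abs_mul_le_one (hx : x = 3 ∨ x = -3)
    (hA : (A : Matrix (Fin 2) (Fin 2) ℤ) = !![0, -1; 1, x])
    (hv : |v 0 * v 1| ≤ 1) (hw : |w 0 * w 1| ≤ 1) (hunit : IsUnit (quadForm x v))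
    (hQ : quadForm x v = quadForm x w) : SameOrbit A v w := by
  have hunit' : IsUnit (quadForm x w) := hQ ▸ hunit
  rcases quadForm_cases_of_abs_mul_le_one hx hv hunit with
      ⟨hv1, hv0, hvn⟩ | ⟨hv1, hva, hvb⟩ <;>
    rcases quadForm_cases_of_abs_mul_le_one hx hw hunit' with
      ⟨hw1, hw0, hwn⟩ | ⟨hw1, hwa, hwb⟩
  · exact (sameOrbit_of_mul_eq_zero hA hv0 hvn).symm.trans
      (sameOrbit_of_mul_eq_zero hA hw0 hwn)
  · exact absurd (hv1.symm.trans (hQ.trans hw1)) (by norm_num)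
  · exact absurd (hv1.symm.trans (hQ.trans hw1)) (by norm_num)
  · have hx0 : x ≠ 0 := by rcases hx with rfl | rfl <;> norm_num
    refine sameOrbit_of_sq_eq_one hva hwa (mul_left_cancel₀ hx0 ?_)
    unfold quadForm at hQ
    linear_combination hQ - hva - hvb + hwa + hwb

theorem sameOrbit_iff_quadForm_eq (hx : x = 3 ∨ x = -3)
    (hA : (A : Matrix (Fin 2) (Fin 2) ℤ) = !![0, -1; 1, x])
    (hv : v ∈ SA A) (hw : w ∈ SA A) : SameOrbit A v w ↔ quadForm x v = quadForm x w := by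
  refine ⟨SameOrbit.quadForm_eq hA, fun hQ => ?_⟩
  rw [mem_SA_iff hA] at hv hw
  obtain ⟨v', hv', hv'v⟩ := exists_abs_mul_le_one_sameOrbit hx hA hv
  obtain ⟨w', hw', hw'w⟩ := exists_abs_mul_le_one_sameOrbit hx hA hw
  rw [← hv'v.quadForm_eq hA, ← hw'w.quadForm_eq hA] at hQ
  rw [← hv'v.quadForm_eq hA] at hv
  exact hv'v.symm.trans ((sameOrbit_of_abs_mul_le_one hx hA hv' hw' hv hQ).trans hw'w)

theorem two_orbits_of_quadForm (hx : x = 3 ∨ x = -3)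
    (hA : (A : Matrix (Fin 2) (Fin 2) ℤ) = !![0, -1; 1, x])
    (hv : quadForm x v = 1) (hw : quadForm x w = -1) :
    v ∈ SA A ∧ w ∈ SA A ∧ ¬ SameOrbit A v w ∧
      ∀ u ∈ SA A, SameOrbit A v u ∨ SameOrbit A w u := by
  have hvS : v ∈ SA A := (mem_SA_iff hA).2 (hv ▸ isUnit_one)
  have hwS : w ∈ SA A := (mem_SA_iff hA).2 (hw ▸ isUnit_one.neg)
  refine ⟨hvS, hwS, fun h => by simpa [hv, hw] using h.quadForm_eq hA, fun u hu => ?_⟩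
  rw [sameOrbit_iff_quadForm_eq hx hA hvS hu, sameOrbit_iff_quadForm_eq hx hA hwS hu, hv, hw]
  rcases Int.isUnit_iff.mp ((mem_SA_iff hA).1 hu) with h | h <;> simp [h]

end

theorem case_x_eq_pm_three (x : ℤ) (hx : x = 3 ∨ x = -3) (A : GL2Z)
    (hA : (A : Matrix (Fin 2) (Fin 2) ℤ) = !![0, -1; 1, x]) :
    (∃ v ∈ SA A, ∃ w ∈ SA A, ¬ SameOrbit A v w ∧
      ∀ u ∈ SA A, SameOrbit A v u ∨ SameOrbit A w u) ∧
    (x = 3 →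
      ![1, 0] ∈ SA A ∧ ![-1, 1] ∈ SA A ∧
      ¬ SameOrbit A ![1, 0] ![-1, 1] ∧
      ∀ u ∈ SA A, SameOrbit A ![1, 0] u ∨ SameOrbit A ![-1, 1] u) := by
  rcases hx with rfl | rfl
  · have h := two_orbits_of_quadForm (Or.inl rfl) hA (v := ![1, 0]) (w := ![-1, 1])
      (by norm_num [quadForm]) (by norm_num [quadForm])
    exact ⟨⟨_, h.1, _, h.2.1, h.2.2⟩, fun _ => h⟩
  · obtain ⟨hv, hw, hvw, hcover⟩ := two_orbits_of_quadForm (Or.inr rfl) hA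
      (v := ![1, 0]) (w := ![-1, -1]) (by norm_num [quadForm]) (by norm_num [quadForm])
    exact ⟨⟨_, hv, _, hw, hvw, hcover⟩, by norm_num⟩
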